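/- For any f: ℕ → ℕ, the function f̃ defined recursively by f̃(n+1) = sup{a > 0 : a^m Π_{i=1}^n f̃(i) ≤ Π_{i=1}^{n+m} f(i) for all m ≥ 1} (with f̃(1) = inf_{m≥1} (Π_{i=1}^m f(i))^{1/m}) is nondecreasing, and f̃ = f when f is nondecreasing. -/

import Mathlib

open MeasureTheory ProbabilityTheory Filter Finset

/-- `Π_{i=1}^n f̃(i)`, the running product of the convexified growth function:
`f̃(n+1) = sup{a > 0 : a^m Π_{i=1}^n f̃(i) ≤ Π_{i=1}^{n+m} f(i) for all m ≥ 1}`. -/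
noncomputable def ftilProd (f : ℕ → ℕ) : ℕ → ℝ
  | 0 => 1
  | n + 1 => ftilProd f n * sSup {a : ℝ | 0 < a ∧ ∀ m : ℕ, 1 ≤ m →
      a ^ m * ftilProd f n ≤ ∏ i ∈ Finset.Icc 1 (n + m), (f i : ℝ)}

/-- the convexified growth function `f̃` (indexed so that `ftilde f n` is `f̃(n)` for
`n ≥ 1`). -/
noncomputable def ftilde (f : ℕ → ℕ) (n : ℕ) : ℝ := ftilProd f n / ftilProd f (n - 1)

/-!
Write `P n = ∏_{i ≤ n} f̃(i)`, `F n = ∏_{i ≤ n} f(i)` and `c n = f̃(n+1)` for the supremum of the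
admissible set `S n = {a > 0 : ∀ m ≥ 1, a^m P n ≤ F (n+m)}`. Each constraint bounds `a` by an `m`-th
root, so the supremum is itself admissible. Since `P (n+1) = c n · P n`, we get
`c n ^ m · P (n+1) = c n ^ (m+1) · P n ≤ F (n+1+m)`: the value `c n` is admissible at the next stage,
whence `c n ≤ c (n+1)`. Starting from `1 ∈ S 0` (as `f ≥ 1`), this also keeps every `S n` nonempty.

If `f` is nondecreasing and `P n = F n`, then `f(n+1)^m F n ≤ F (n+m)` makes `f(n+1)` admissible,
while the constraint for `m = 1` bounds every admissible value by `f(n+1)`; so `c n = f(n+1)` and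
`P (n+1) = F (n+1)`.
-/

lemma csSup_pow_le_of_forall_pow_le {s : Set ℝ} (hs : s.Nonempty) (hbdd : BddAbove s)
    (hnonneg : ∀ a ∈ s, 0 ≤ a) {m : ℕ} (hm : m ≠ 0) {x : ℝ} (h : ∀ a ∈ s, a ^ m ≤ x) :
    sSup s ^ m ≤ x := by
  obtain ⟨a₀, ha₀⟩ := hs
  have hx : 0 ≤ x := (pow_nonneg (hnonneg a₀ ha₀) m).trans (h a₀ ha₀)
  have hroot : (x ^ (m⁻¹ : ℝ)) ^ m = x := Real.rpow_inv_natCast_pow hx hm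
  have hle : sSup s ≤ x ^ (m⁻¹ : ℝ) :=
    csSup_le ⟨a₀, ha₀⟩ fun a ha =>
      le_of_pow_le_pow_left₀ hm (Real.rpow_nonneg hx _) ((h a ha).trans_eq hroot.symm)
  calc sSup s ^ m ≤ (x ^ (m⁻¹ : ℝ)) ^ m :=
        pow_le_pow_left₀ ((hnonneg a₀ ha₀).trans (le_csSup hbdd ha₀)) hle m
    _ = x := hroot

noncomputable def runningProd (f : ℕ → ℕ) (n : ℕ) : ℝ := ∏ i ∈ Icc 1 n, (f i : ℝ)

def ftilSet (f : ℕ → ℕ) (n : ℕ) : Set ℝ :=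
  {a : ℝ | 0 < a ∧ ∀ m : ℕ, 1 ≤ m → a ^ m * ftilProd f n ≤ runningProd f (n + m)}

section

variable {f : ℕ → ℕ} {n : ℕ}

lemma runningProd_zero : runningProd f 0 = 1 := by
  simp [runningProd]

lemma runningProd_add_one : runningProd f (n + 1) = runningProd f n * f (n + 1) :=
  prod_Icc_succ_top (by omega) _

lemma runningProd_nonneg : 0 ≤ runningProd f n :=
  prod_nonneg fun _ _ => Nat.cast_nonneg _

lemma one_le_runningProd (hf : ∀ n, 1 ≤ f n) (n : ℕ) : 1 ≤ runningProd f n := by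
  unfold runningProd
  exact_mod_cast one_le_prod' fun i _ => hf i

lemma ftilProd_add_one : ftilProd f (n + 1) = ftilProd f n * sSup (ftilSet f n) := rfl

lemma bddAbove_ftilSet (hP : 0 < ftilProd f n) : BddAbove (ftilSet f n) :=
  ⟨runningProd f (n + 1) / ftilProd f n, fun a ha =>
    (le_div_iff₀ hP).2 (by simpa using ha.2 1 le_rfl)⟩

lemma one_mem_ftilSet_of_mem (hP : 0 ≤ ftilProd f n) {a : ℝ} (ha : a ∈ ftilSet f n)
    (h1a : 1 ≤ a) : (1 : ℝ) ∈ ftilSet f n := by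
  refine ⟨one_pos, fun m hm => ?_⟩
  calc (1 : ℝ) ^ m * ftilProd f n ≤ a ^ m * ftilProd f n := by gcongr
    _ ≤ runningProd f (n + m) := ha.2 m hm

lemma sSup_ftilSet_mem (hP : 0 < ftilProd f n) (h1 : (1 : ℝ) ∈ ftilSet f n) :
    sSup (ftilSet f n) ∈ ftilSet f n := by
  have hbdd := bddAbove_ftilSet hP
  refine ⟨one_pos.trans_le (le_csSup hbdd h1), fun m hm => ?_⟩
  rw [← le_div_iff₀ hP]
  exact csSup_pow_le_of_forall_pow_le ⟨1, h1⟩ hbdd (fun a ha => ha.1.le) (by omega)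
    fun a ha => (le_div_iff₀ hP).2 (ha.2 m hm)

lemma sSup_ftilSet_mem_add_one (hP : 0 < ftilProd f n) (h1 : (1 : ℝ) ∈ ftilSet f n) :
    sSup (ftilSet f n) ∈ ftilSet f (n + 1) := by
  set c := sSup (ftilSet f n)
  have hc := sSup_ftilSet_mem hP h1
  refine ⟨hc.1, fun m _ => ?_⟩
  calc c ^ m * ftilProd f (n + 1) = c ^ (m + 1) * ftilProd f n := by
        rw [ftilProd_add_one]; ring
    _ ≤ runningProd f (n + (m + 1)) := hc.2 (m + 1) (by omega)
    _ = runningProd f (n + 1 + m) := by rw [add_right_comm, add_assoc]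

lemma ftilProd_pos_and_one_mem_ftilSet (hf : ∀ n, 1 ≤ f n) (n : ℕ) :
    0 < ftilProd f n ∧ (1 : ℝ) ∈ ftilSet f n := by
  induction n with
  | zero =>
    refine ⟨one_pos, one_pos, fun m _ => ?_⟩
    simpa [ftilProd] using one_le_runningProd hf m
  | succ n ih =>
    obtain ⟨hP, h1⟩ := ih
    have hc1 : 1 ≤ sSup (ftilSet f n) := le_csSup (bddAbove_ftilSet hP) h1
    have hP' : 0 < ftilProd f (n + 1) := by
      rw [ftilProd_add_one]; exact mul_pos hP (one_pos.trans_le hc1)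
    exact ⟨hP', one_mem_ftilSet_of_mem hP'.le (sSup_ftilSet_mem_add_one hP h1) hc1⟩

lemma ftilde_add_one (hf : ∀ n, 1 ≤ f n) (n : ℕ) : ftilde f (n + 1) = sSup (ftilSet f n) := by
  rw [ftilde, Nat.add_sub_cancel, ftilProd_add_one,
    mul_div_cancel_left₀ _ (ftilProd_pos_and_one_mem_ftilSet hf n).1.ne']

lemma monotone_sSup_ftilSet (hf : ∀ n, 1 ≤ f n) : Monotone fun n => sSup (ftilSet f n) := by
  refine monotone_nat_of_le_succ fun n => ?_
  obtain ⟨hP, h1⟩ := ftilProd_pos_and_one_mem_ftilSet hf n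
  exact le_csSup (bddAbove_ftilSet (ftilProd_pos_and_one_mem_ftilSet hf (n + 1)).1)
    (sSup_ftilSet_mem_add_one hP h1)

lemma pow_mul_runningProd_le (hmono : MonotoneOn f (Set.Ici 1)) (n m : ℕ) :
    (f (n + 1) : ℝ) ^ m * runningProd f n ≤ runningProd f (n + m) := by
  induction m with
  | zero => simp
  | succ m ih =>
    have hle : (f (n + 1) : ℝ) ≤ f (n + (m + 1)) := by
      exact_mod_cast hmono (by simp) (Set.mem_Ici.2 (by omega)) (by omega)
    calc (f (n + 1) : ℝ) ^ (m + 1) * runningProd f n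
        = (f (n + 1) : ℝ) ^ m * runningProd f n * f (n + 1) := by ring
      _ ≤ runningProd f (n + m) * f (n + (m + 1)) :=
        mul_le_mul ih hle (Nat.cast_nonneg _) runningProd_nonneg
      _ = runningProd f (n + (m + 1)) := runningProd_add_one.symm

lemma isGreatest_ftilSet (hf : ∀ n, 1 ≤ f n) (hmono : MonotoneOn f (Set.Ici 1))
    (hPn : ftilProd f n = runningProd f n) : IsGreatest (ftilSet f n) (f (n + 1)) := by
  have hF : 0 < runningProd f n := one_pos.trans_le (one_le_runningProd hf n)
  refine ⟨⟨by exact_mod_cast hf (n + 1), fun m _ => hPn ▸ pow_mul_runningProd_le hmono n m⟩,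
    fun a ha => ?_⟩
  have h := ha.2 1 le_rfl
  rw [pow_one, hPn, runningProd_add_one, mul_comm] at h
  exact le_of_mul_le_mul_left h hF

lemma ftilProd_eq_runningProd (hf : ∀ n, 1 ≤ f n) (hmono : MonotoneOn f (Set.Ici 1)) (n : ℕ) :
    ftilProd f n = runningProd f n := by
  induction n with
  | zero => rw [runningProd_zero]; rfl
  | succ n ih =>
    rw [ftilProd_add_one, (isGreatest_ftilSet hf hmono ih).csSup_eq, ih, runningProd_add_one]

end

/-- `f̃` is always nondecreasing, and `f̃ = f` when `f` is
nondecreasing. -/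
theorem ftilde_monotone_and_eq_of_monotone (f : ℕ → ℕ) (hf : ∀ n, 1 ≤ f n) :
    (∀ m n : ℕ, 1 ≤ m → m ≤ n → ftilde f m ≤ ftilde f n) ∧
    ((∀ m n : ℕ, 1 ≤ m → m ≤ n → f m ≤ f n) →
      ∀ n : ℕ, 1 ≤ n → ftilde f n = (f n : ℝ)) := by
  constructor
  · intro m n hm hmn
    obtain ⟨a, rfl⟩ := Nat.exists_eq_add_of_le' hm
    obtain ⟨b, rfl⟩ := Nat.exists_eq_add_of_le' (hm.trans hmn)
    rw [ftilde_add_one hf, ftilde_add_one hf]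
    exact monotone_sSup_ftilSet hf (by omega)
  · intro hmono n hn
    have hmono' : MonotoneOn f (Set.Ici 1) := fun a ha b _ hab => hmono a b ha hab
    obtain ⟨k, rfl⟩ := Nat.exists_eq_add_of_le' hn
    rw [ftilde_add_one hf, (isGreatest_ftilSet hf hmono'
      (ftilProd_eq_runningProd hf hmono' k)).csSup_eq]
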